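/- arXiv:2002.09187 — 2 statements merged into one kernel-verified Lean document; each statement's English description precedes it below -/
import Mathlib

section
/- Let U ⊆ ℝ^d be open, let q : U → ℂ be continuous, and let ξ ∈ ℂ^d satisfy ξ ⬝ ξ = 0. Let ψ : U → ℂ be twice continuously differentiable and define u(x) := exp(½ ξ·x) (1 + ψ(x)). Then u satisfies the Schrödinger equation Δu + q u = 0 at every point of U if and only if ψ satisfies Δψ + ξ·∇ψ + q ψ = −q at every point of U. -/
open Complex

/-- The partial derivative `∂f/∂x_k` of `f : ℝ^d → ℂ`. -/
noncomputable def partialDeriv' (d : ℕ) (k : Fin d)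
    (f : EuclideanSpace ℝ (Fin d) → ℂ) (x : EuclideanSpace ℝ (Fin d)) : ℂ :=
  fderiv ℝ f x (EuclideanSpace.single k (1 : ℝ))

/-- The Laplacian `Δf = ∑ₖ ∂²f/∂x_k²` of `f : ℝ^d → ℂ`. -/
noncomputable def laplacian' (d : ℕ) (f : EuclideanSpace ℝ (Fin d) → ℂ)
    (x : EuclideanSpace ℝ (Fin d)) : ℂ :=
  ∑ k, partialDeriv' d k (fun y => partialDeriv' d k f y) x

/-! The ansatz works because `∂ₖ (e^L f) = e^L (∂ₖ f + cₖ f)` with `cₖ = L eₖ` for a real-linear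
`L`, so `Δ (e^L f) = e^L (Δf + 2 ∑ₖ cₖ ∂ₖ f + (∑ₖ cₖ²) f)`. For `L x = ½ ξ·x` the first-order term
is `ξ·∇f` and `∑ₖ cₖ² = ¼ ξ⬝ξ = 0`; applied to `f = 1 + ψ` and divided by the nonvanishing
exponential this turns `Δu + qu = 0` into `Δψ + ξ·∇ψ + qψ = -q`. -/

section Conjugation

variable {d : ℕ}

noncomputable def complexPairing (ξ : Fin d → ℂ) : EuclideanSpace ℝ (Fin d) →L[ℝ] ℂ :=
  ∑ k, ξ k • ofRealCLM.comp (EuclideanSpace.proj k)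

theorem complexPairing_apply (ξ : Fin d → ℂ) (x : EuclideanSpace ℝ (Fin d)) :
    complexPairing ξ x = ∑ k, ξ k * (x k : ℂ) := by
  simp [complexPairing]

theorem complexPairing_single (ξ : Fin d → ℂ) (k : Fin d) :
    complexPairing ξ (EuclideanSpace.single k 1) = ξ k := by
  rw [complexPairing_apply, Finset.sum_eq_single k (fun j _ hj => by simp [hj]) (by simp)]
  simp

theorem fderiv_cexp_mul_apply {E : Type*} [NormedAddCommGroup E] [NormedSpace ℝ E]
    (L : E →L[ℝ] ℂ) {f : E → ℂ} {x : E} (hf : DifferentiableAt ℝ f x) (v : E) :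
    fderiv ℝ (fun y => exp (L y) * f y) x v = exp (L x) * (fderiv ℝ f x v + L v * f x) := by
  have h : HasFDerivAt (fun y => exp (L y) * f y)
      (exp (L x) • fderiv ℝ f x + f x • exp (L x) • L) x :=
    L.hasFDerivAt.cexp.mul hf.hasFDerivAt
  rw [h.fderiv]
  simp only [add_apply, smul_apply, smul_eq_mul]
  ring

theorem partialDeriv'_cexp_mul (L : EuclideanSpace ℝ (Fin d) →L[ℝ] ℂ) (k : Fin d)
    {f : EuclideanSpace ℝ (Fin d) → ℂ} {x : EuclideanSpace ℝ (Fin d)}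
    (hf : DifferentiableAt ℝ f x) :
    partialDeriv' d k (fun y => exp (L y) * f y) x =
      exp (L x) * (partialDeriv' d k f x + L (EuclideanSpace.single k 1) * f x) :=
  fderiv_cexp_mul_apply L hf _

theorem partialDeriv'_const_add (k : Fin d) (c : ℂ) (f : EuclideanSpace ℝ (Fin d) → ℂ) :
    partialDeriv' d k (fun y => c + f y) = partialDeriv' d k f := by
  ext x
  simp only [partialDeriv', fderiv_const_add]

theorem laplacian'_const_add (c : ℂ) (f : EuclideanSpace ℝ (Fin d) → ℂ) :
    laplacian' d (fun y => c + f y) = laplacian' d f := by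
  ext x
  simp only [laplacian', partialDeriv'_const_add]

variable {U : Set (EuclideanSpace ℝ (Fin d))} {f : EuclideanSpace ℝ (Fin d) → ℂ}
  {x : EuclideanSpace ℝ (Fin d)}

theorem ContDiffOn.differentiableAt_partialDeriv' (hf : ContDiffOn ℝ 2 f U) (hU : IsOpen U)
    (hx : x ∈ U) (k : Fin d) : DifferentiableAt ℝ (partialDeriv' d k f) x :=
  ((hf.fderiv_of_isOpen hU (by norm_num : (1 : WithTop ℕ∞) + 1 ≤ 2)).differentiableOn
    one_ne_zero |>.differentiableAt (hU.mem_nhds hx)).clm_apply (differentiableAt_const _)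

theorem partialDeriv'_partialDeriv'_cexp_mul (L : EuclideanSpace ℝ (Fin d) →L[ℝ] ℂ) (k : Fin d)
    (hf : ContDiffOn ℝ 2 f U) (hU : IsOpen U) (hx : x ∈ U) :
    partialDeriv' d k (fun y => partialDeriv' d k (fun z => exp (L z) * f z) y) x =
      exp (L x) * (partialDeriv' d k (fun y => partialDeriv' d k f y) x
        + 2 * L (EuclideanSpace.single k 1) * partialDeriv' d k f x
        + L (EuclideanSpace.single k 1) ^ 2 * f x) := by
  set c := L (EuclideanSpace.single k 1)
  have hf₁ : ∀ y ∈ U, DifferentiableAt ℝ f y := fun y hy =>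
    (hf.differentiableOn two_ne_zero).differentiableAt (hU.mem_nhds hy)
  have hfirst : (fun y => partialDeriv' d k (fun z => exp (L z) * f z) y) =ᶠ[nhds x]
      fun y => exp (L y) * (partialDeriv' d k f y + c * f y) := by
    filter_upwards [hU.mem_nhds hx] with y hy using partialDeriv'_cexp_mul L k (hf₁ y hy)
  have hg' : HasFDerivAt (fun y => partialDeriv' d k f y + c * f y)
      (fderiv ℝ (fun y => partialDeriv' d k f y) x + c • fderiv ℝ f x) x :=
    (hf.differentiableAt_partialDeriv' hU hx k).hasFDerivAt.add
      ((hf₁ x hx).hasFDerivAt.const_mul c)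
  rw [partialDeriv', hfirst.fderiv_eq, ← partialDeriv', partialDeriv'_cexp_mul L k hg'.differentiableAt,
    partialDeriv', hg'.fderiv]
  simp only [add_apply, smul_apply, smul_eq_mul, partialDeriv']
  ring

theorem laplacian'_cexp_mul (L : EuclideanSpace ℝ (Fin d) →L[ℝ] ℂ)
    (hf : ContDiffOn ℝ 2 f U) (hU : IsOpen U) (hx : x ∈ U) :
    laplacian' d (fun y => exp (L y) * f y) x =
      exp (L x) * (laplacian' d f x
        + 2 * ∑ k, L (EuclideanSpace.single k 1) * partialDeriv' d k f x
        + (∑ k, L (EuclideanSpace.single k 1) ^ 2) * f x) := by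
  simp only [laplacian', partialDeriv'_partialDeriv'_cexp_mul L _ hf hU hx, ← Finset.mul_sum,
    Finset.sum_add_distrib, Finset.sum_mul, mul_assoc]

end Conjugation

theorem cgo_ansatz_iff_general (d : ℕ) (U : Set (EuclideanSpace ℝ (Fin d))) (hU : IsOpen U)
    (q : EuclideanSpace ℝ (Fin d) → ℂ)
    (ξ : Fin d → ℂ) (hξ : (∑ k, ξ k * ξ k) = 0)
    (ψ : EuclideanSpace ℝ (Fin d) → ℂ) (hψ : ContDiffOn ℝ 2 ψ U)
    (u : EuclideanSpace ℝ (Fin d) → ℂ)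
    (hu : ∀ x, u x = Complex.exp ((1 / 2 : ℂ) * ∑ k, ξ k * (x k : ℂ)) * (1 + ψ x)) :
    (∀ x ∈ U, laplacian' d u x + q x * u x = 0) ↔
    (∀ x ∈ U, laplacian' d ψ x + (∑ k, ξ k * partialDeriv' d k ψ x) + q x * ψ x = -q x) := by
  set L := (1 / 2 : ℂ) • complexPairing ξ
  have hL : ∀ y, L y = (1 / 2 : ℂ) * ∑ k, ξ k * (y k : ℂ) := fun y => by
    simp [L, complexPairing_apply]
  have hu' : u = fun y => exp (L y) * (1 + ψ y) := funext fun y => by rw [hu, hL]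
  have hlap : ∀ x ∈ U, laplacian' d u x =
      exp (L x) * (laplacian' d ψ x + ∑ k, ξ k * partialDeriv' d k ψ x) := fun x hx => by
    have hcoeff : ∑ k, L (EuclideanSpace.single k 1) ^ 2 = 0 := by
      simp only [L, smul_apply, complexPairing_single, smul_eq_mul]
      rw [← mul_zero (1 / 4 : ℂ), ← hξ, Finset.mul_sum]
      exact Finset.sum_congr rfl fun k _ => by ring
    rw [hu', laplacian'_cexp_mul L (contDiffOn_const.add hψ) hU hx, laplacian'_const_add,
      hcoeff, zero_mul, add_zero, Finset.mul_sum]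
    refine congrArg _ (congrArg _ (Finset.sum_congr rfl fun k _ => ?_))
    simp only [partialDeriv'_const_add, L, smul_apply, complexPairing_single, smul_eq_mul]
    ring
  refine forall₂_congr fun x hx => ?_
  have hfactor : laplacian' d u x + q x * u x = exp (L x) *
      (laplacian' d ψ x + (∑ k, ξ k * partialDeriv' d k ψ x) + q x * ψ x - -q x) := by
    rw [hlap x hx, hu']
    ring
  rw [hfactor, mul_eq_zero, sub_eq_zero, or_iff_right (exp_ne_zero _)]

/-- Let `q` be continuous on an open `U ⊆ ℝ^d`, `ξ ∈ ℂ^d` with `ξ⬝ξ = 0`, `ψ` `C²` on `U`,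
and `u(x) = exp(½ ξ·x)(1 + ψ(x))`. Then `Δu + q u = 0` on `U` iff
`Δψ + ξ·∇ψ + q ψ = −q` on `U`. -/
theorem cgo_ansatz_iff (d : ℕ) (U : Set (EuclideanSpace ℝ (Fin d))) (hU : IsOpen U)
    (q : EuclideanSpace ℝ (Fin d) → ℂ) (hq : ContinuousOn q U)
    (ξ : Fin d → ℂ) (hξ : (∑ k, ξ k * ξ k) = 0)
    (ψ : EuclideanSpace ℝ (Fin d) → ℂ) (hψ : ContDiffOn ℝ 2 ψ U)
    (u : EuclideanSpace ℝ (Fin d) → ℂ)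
    (hu : ∀ x, u x = Complex.exp ((1 / 2 : ℂ) * ∑ k, ξ k * (x k : ℂ)) * (1 + ψ x)) :
    (∀ x ∈ U, laplacian' d u x + q x * u x = 0) ↔
    (∀ x ∈ U, laplacian' d ψ x + (∑ k, ξ k * partialDeriv' d k ψ x) + q x * ψ x = -q x) :=
  cgo_ansatz_iff_general d U hU q ξ hξ ψ hψ u hu
end

section
/- Let β > 0, C > 0, A ≥ 1 and 0 < ε < 1. Suppose X ≥ 0 is a real number such that X² ≤ A ( R^{−β} + e^{C R} ε² ) for all R > 0. Then X² ≤ 2A ( (C + β/e) / (−2 log ε) )^{β}; in particular there is a constant C' > 0 depending only on A, C and β such that X ≤ C' (−log ε)^{−β/2}. -/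
/-!
Take `R₀ = -2 log ε / (C + β/e)`, so that `e^{C R₀} ε² = e^{-β R₀ / e}`. Since `log R ≤ R / e`,
this is at most `R₀^{-β}`, hence `X² ≤ 2A R₀^{-β} = 2A ((C + β/e) / (-2 log ε))^β`; taking square
roots gives the bound in powers of `-log ε`.
-/

open Real

theorem log_le_div_exp_one {t : ℝ} (ht : 0 < t) : log t ≤ t / exp 1 := by
  have h := log_le_sub_one_of_pos (show 0 < t / exp 1 by positivity)
  rw [log_div ht.ne' (exp_ne_zero 1), log_exp] at h
  linarith

theorem exp_neg_div_exp_one_mul_le_rpow_neg {β R : ℝ} (hβ : 0 ≤ β) (hR : 0 < R) :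
    exp (-(β / exp 1 * R)) ≤ R ^ (-β) := by
  rw [rpow_def_of_pos hR, exp_le_exp]
  have := mul_le_mul_of_nonneg_left (log_le_div_exp_one hR) hβ
  linarith [show β * (R / exp 1) = β / exp 1 * R by ring]

theorem exp_mul_mul_sq_le_rpow_neg {β C R ε : ℝ} (hβ : 0 ≤ β) (hR : 0 < R) (hε : 0 < ε)
    (hRε : (C + β / exp 1) * R = -2 * log ε) :
    exp (C * R) * ε ^ 2 ≤ R ^ (-β) := by
  have hε2 : ε ^ 2 = exp (2 * log ε) := by
    rw [mul_comm, exp_mul, exp_log hε, rpow_two]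
  calc exp (C * R) * ε ^ 2 = exp (-(β / exp 1 * R)) := by
        rw [hε2, ← exp_add]
        congr 1
        linarith
    _ ≤ R ^ (-β) := exp_neg_div_exp_one_mul_le_rpow_neg hβ hR

theorem sq_le_of_forall_le_rpow_neg_add_exp_mul {β C A ε X : ℝ} (hβ : 0 ≤ β)
    (hK : 0 < C + β / exp 1) (hA : 0 ≤ A) (hε₀ : 0 < ε) (hε₁ : ε < 1)
    (h : ∀ R : ℝ, 0 < R → X ^ 2 ≤ A * (R ^ (-β) + exp (C * R) * ε ^ 2)) :
    X ^ 2 ≤ 2 * A * ((C + β / exp 1) / (-2 * log ε)) ^ β := by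
  have hL : 0 < -2 * log ε := by linarith [log_neg hε₀ hε₁]
  set R₀ := -2 * log ε / (C + β / exp 1)
  have hR₀ : 0 < R₀ := div_pos hL hK
  have hR₀ε : (C + β / exp 1) * R₀ = -2 * log ε := mul_div_cancel₀ _ hK.ne'
  have hR₀β : R₀ ^ (-β) = ((C + β / exp 1) / (-2 * log ε)) ^ β := by
    rw [rpow_neg hR₀.le, ← inv_rpow hR₀.le, inv_div]
  calc X ^ 2 ≤ A * (R₀ ^ (-β) + exp (C * R₀) * ε ^ 2) := h R₀ hR₀
    _ ≤ A * (R₀ ^ (-β) + R₀ ^ (-β)) := by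
        gcongr
        exact exp_mul_mul_sq_le_rpow_neg hβ hR₀ hε₀ hR₀ε
    _ = 2 * A * ((C + β / exp 1) / (-2 * log ε)) ^ β := by rw [hR₀β]; ring

theorem le_sqrt_mul_rpow_neg_log_of_sq_le {β K A ε X : ℝ} (hK : 0 ≤ K) (hε₀ : 0 < ε)
    (hε₁ : ε < 1) (h : X ^ 2 ≤ 2 * A * (K / (-2 * log ε)) ^ β) :
    X ≤ √(2 * A * (K / 2) ^ β) * (-log ε) ^ (-β / 2) := by
  have hM : 0 < -log ε := by linarith [log_neg hε₀ hε₁]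
  have hsplit : 2 * A * (K / (-2 * log ε)) ^ β = 2 * A * (K / 2) ^ β * (-log ε) ^ (-β) := by
    rw [show K / (-2 * log ε) = K / 2 * (-log ε)⁻¹ by field_simp, mul_rpow (by positivity)
      (inv_nonneg.2 hM.le), inv_rpow hM.le, rpow_neg hM.le]
    ring
  have hsqrt : √((-log ε) ^ (-β)) = (-log ε) ^ (-β / 2) := by
    rw [sqrt_eq_rpow, ← rpow_mul hM.le]
    ring_nf
  calc X ≤ √(X ^ 2) := by rw [sqrt_sq_eq_abs]; exact le_abs_self X
    _ ≤ √(2 * A * (K / 2) ^ β * (-log ε) ^ (-β)) := sqrt_le_sqrt (hsplit ▸ h)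
    _ = √(2 * A * (K / 2) ^ β) * (-log ε) ^ (-β / 2) := by
        rw [sqrt_mul' _ (rpow_nonneg hM.le _), hsqrt]

/-- Optimization lemma: if `X² ≤ A(R^{−β} + e^{CR} ε²)` for all `R > 0`, then
`X² ≤ 2A((C + β/e)/(−2 log ε))^β`; in particular `X ≤ C' (−log ε)^{−β/2}` with
`C'` depending only on `A`, `C` and `β`. -/
theorem log_stability_optimization (β C A : ℝ) (hβ : 0 < β) (hC : 0 < C) (hA : 1 ≤ A) :
    (∀ ε X : ℝ, 0 < ε → ε < 1 → 0 ≤ X →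
      (∀ R : ℝ, 0 < R → X ^ 2 ≤ A * (R ^ (-β) + Real.exp (C * R) * ε ^ 2)) →
      X ^ 2 ≤ 2 * A * ((C + β / Real.exp 1) / (-2 * Real.log ε)) ^ β) ∧
    ∃ C' > 0, ∀ ε X : ℝ, 0 < ε → ε < 1 → 0 ≤ X →
      (∀ R : ℝ, 0 < R → X ^ 2 ≤ A * (R ^ (-β) + Real.exp (C * R) * ε ^ 2)) →
      X ≤ C' * (-Real.log ε) ^ (-β / 2) := by
  have hK : 0 < C + β / exp 1 := by positivity
  have hA₀ : 0 < A := by linarith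
  have hsq {ε X : ℝ} (hε₀ : 0 < ε) (hε₁ : ε < 1)
      (h : ∀ R : ℝ, 0 < R → X ^ 2 ≤ A * (R ^ (-β) + exp (C * R) * ε ^ 2)) :=
    sq_le_of_forall_le_rpow_neg_add_exp_mul hβ.le hK hA₀.le hε₀ hε₁ h
  refine ⟨fun _ _ hε₀ hε₁ _ h ↦ hsq hε₀ hε₁ h, √(2 * A * ((C + β / exp 1) / 2) ^ β),
    sqrt_pos.2 (by positivity), fun _ _ hε₀ hε₁ _ h ↦ ?_⟩
  exact le_sqrt_mul_rpow_neg_log_of_sq_le hK.le hε₀ hε₁ (hsq hε₀ hε₁ h)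
end
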